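/- Suppose the S-torsion in R is bounded, i.e., there exists r ∈ S with r·Γ_S(R) = 0. Then for every injective R-module J, the natural map J → S⁻¹J is surjective; consequently the quotient J/Γ_S(J) is a module over S⁻¹R. -/

import Mathlib

/-!
Since `r` kills the `S`-torsion of `R`, every `c` with `c * (r * s) = 0` satisfies `r * c = 0`.
Hence `c * (r * s) ↦ c • (r • x)` is a well-defined map on the ideal generated by `r * s`, and
injectivity of `J` extends it to `R`; the image `y` of `1` satisfies `r • (s • y) = r • x`, i.e.
`x / s = y / 1` in `S⁻¹J`. Bijectivity of `s` on `J / Γ_S(J)` then holds for any module whose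
localization map is surjective.
-/

open LinearMap Submodule

universe u v

theorem Module.Injective.exists_smul_eq {R : Type u} [Ring R] [Small.{v} R] {Q : Type v}
    [AddCommGroup Q] [Module R Q] [Module.Injective R Q] {a : R} {m : Q}
    (h : ∀ c : R, c * a = 0 → c • m = 0) : ∃ y : Q, a • y = m := by
  let φ := toSpanSingleton R R a
  have hle : ker φ ≤ ker (toSpanSingleton R Q m) := fun c hc => h c hc
  obtain ⟨g, hg⟩ := Module.Injective.extension_property R Q _ _ ((ker φ).liftQ φ le_rfl)
    (by rw [← ker_eq_bot]; exact ker_liftQ_eq_bot _ _ _ le_rfl)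
    ((ker φ).liftQ (toSpanSingleton R Q m) hle)
  refine ⟨g 1, ?_⟩
  calc a • g 1 = g ((ker φ).liftQ φ le_rfl (Submodule.Quotient.mk 1)) := by
        rw [← map_smul, smul_eq_mul, mul_one]; simp [φ]
    _ = m := by rw [← comp_apply, hg]; simp

section Localization

variable {R : Type u} [CommRing R] {S : Submonoid R}

theorem Module.Injective.mkLinearMap_surjective_of_bounded_torsion' {J : Type v}
    [AddCommGroup J] [Module R J] [Small.{v} R] [Module.Injective R J] {r : S}
    (hr : ∀ x ∈ torsion' R R S, (r : R) • x = 0) :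
    Function.Surjective (LocalizedModule.mkLinearMap S J) := by
  intro z
  induction z using LocalizedModule.induction_on with
  | h x s =>
    have hann : ∀ c : R, c * (r * s) = 0 → c • (r : R) • x = 0 := fun c hc => by
      have hc : c ∈ torsion' R R S := ⟨r * s, by simpa [Submonoid.smul_def, mul_comm] using hc⟩
      rw [smul_smul, mul_comm, ← smul_eq_mul, hr c hc, zero_smul]
    obtain ⟨y, hy⟩ := Module.Injective.exists_smul_eq hann
    refine ⟨y, LocalizedModule.mk_eq.mpr ⟨r, ?_⟩⟩
    simpa [Submonoid.smul_def, mul_smul] using hy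

variable {M : Type v} [AddCommGroup M] [Module R M]

theorem smul_injective_quotient_torsion' (s : S) :
    Function.Injective (fun x : M ⧸ torsion' R M S => (s : R) • x) := by
  refine (injective_iff_map_eq_zero (DistribSMul.toAddMonoidHom _ (s : R))).mpr ?_
  rintro ⟨x⟩ hx
  obtain ⟨t, ht⟩ := (Submodule.Quotient.mk_eq_zero _).mp hx
  exact (Submodule.Quotient.mk_eq_zero _).mpr
    ⟨t * s, by simpa [mul_smul, Submonoid.smul_def] using ht⟩

theorem smul_surjective_quotient_torsion'_of_surjective
    (h : Function.Surjective (LocalizedModule.mkLinearMap S M)) (s : S) :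
    Function.Surjective (fun x : M ⧸ torsion' R M S => (s : R) • x) := by
  rintro ⟨x⟩
  obtain ⟨y, hy⟩ := h (LocalizedModule.mk x s)
  obtain ⟨u, hu⟩ := LocalizedModule.mk_eq.mp hy
  refine ⟨Submodule.Quotient.mk y, (Submodule.Quotient.eq _).mpr ⟨u, ?_⟩⟩
  simpa [Submonoid.smul_def, smul_sub, sub_eq_zero] using hu

end Localization

theorem injective_localization_surjective_of_bounded_torsion
    (R : Type) [CommRing R] (S : Submonoid R)
    (hbdd : ∃ r : S, ∀ x ∈ Submodule.torsion' R R S, (r : R) • x = 0)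
    (J : Type) [AddCommGroup J] [Module R J] (hJ : Module.Injective R J) :
    Function.Surjective (LocalizedModule.mkLinearMap S J) ∧
    (∀ s : S, Function.Bijective
      (fun x : J ⧸ Submodule.torsion' R J S => (s : R) • x)) := by
  obtain ⟨r, hr⟩ := hbdd
  have hsurj := Module.Injective.mkLinearMap_surjective_of_bounded_torsion' (J := J) hr
  exact ⟨hsurj, fun s => ⟨smul_injective_quotient_torsion' s,
    smul_surjective_quotient_torsion'_of_surjective hsurj s⟩⟩
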